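/- For every positive integer n there exist a group G and a submonoid M of G such that the n-fold alternating product M·M⁻¹·M·…·M^{(−1)^{n−1}} equals G, but the product of the first n−1 of these factors does not equal G. (Kuczma's problem, answered affirmatively.) -/
import Mathlib

open Pointwise

/-- The `m`-fold alternating elementwise product `M · M⁻¹ · M · … · M^{(−1)^{m−1}}`
of a subset `M` of a group (with `altProd M 0 = {1}`). -/
def altProd {G : Type*} [Group G] (M : Set G) : ℕ → Set G
  | 0 => {1}
  | m + 1 => altProd M m * (if Even m then M else M⁻¹)

namespace Kuczma


variable {G : Type*} [Group G]

theorem altProd_succ (M : Set G) (m : ℕ) :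
    altProd M (m+1) = altProd M m * (if Even m then M else M⁻¹) := rfl

theorem one_mem_altProd {M : Set G} (h1 : (1:G) ∈ M) (k : ℕ) : (1:G) ∈ altProd M k := by
  induction k with
  | zero => simp [altProd]
  | succ m ih =>
    rw [altProd_succ]
    refine ⟨1, ih, 1, ?_, by simp⟩
    split
    · exact h1
    · simpa using h1

theorem altProd_mono_succ {M : Set G} (h1 : (1:G) ∈ M) (k : ℕ) :
    altProd M k ⊆ altProd M (k+1) := by
  intro x hx
  rw [altProd_succ]
  refine ⟨x, hx, 1, ?_, by simp⟩
  split
  · exact h1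
  · simpa using h1

theorem altProd_mono {M : Set G} (h1 : (1:G) ∈ M) {k l : ℕ} (h : k ≤ l) :
    altProd M k ⊆ altProd M l := by
  induction h with
  | refl => exact Set.Subset.rfl
  | step h ih => exact fun x hx => altProd_mono_succ h1 _ (ih hx)

theorem altProd_univ_mono {M : Set G} (h1 : (1:G) ∈ M) {k l : ℕ} (h : k ≤ l)
    (hfull : altProd M k = Set.univ) : altProd M l = Set.univ :=
  Set.eq_univ_of_univ_subset (hfull ▸ altProd_mono h1 h)

theorem altProd_ne_univ_mono {M : Set G} (h1 : (1:G) ∈ M) {k l : ℕ} (h : k ≤ l)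
    (hne : altProd M l ≠ Set.univ) : altProd M k ≠ Set.univ := by
  intro hf; exact hne (altProd_univ_mono h1 h hf)

/-- Extraction of an alternating list from membership in `altProd`. -/
theorem exists_chain {M : Set G} {k : ℕ} {x : G} (hx : x ∈ altProd M k) :
    ∃ l : List G, l.length = k ∧
      (∀ j, j < l.length → l.getD j 1 ∈ (if Even j then M else M⁻¹)) ∧ l.prod = x := by
  induction k generalizing x with
  | zero =>
    refine ⟨[], rfl, by simp, ?_⟩
    simpa [altProd] using hx.symm
  | succ m ih =>
    rw [altProd_succ] at hx
    obtain ⟨a, ha, b, hb, hab⟩ := hx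
    obtain ⟨l, hlen, hmem, hprod⟩ := ih ha
    refine ⟨l ++ [b], by simp [hlen], ?_, by simp [hprod, hab]⟩
    intro j hj
    simp only [List.length_append, List.length_cons, List.length_nil, hlen] at hj
    rcases lt_or_ge j m with hjm | hjm
    · rw [List.getD_eq_getElem _ _ (by simp [hlen]; omega),
        List.getElem_append_left (by omega)]
      rw [← List.getD_eq_getElem _ 1 (by omega)]
      exact hmem j (by omega)
    · have hjeq : j = m := by omega
      subst hjeq
      have hlt : j < (l ++ [b]).length := by simp [hlen]
      rw [List.getD_eq_getElem _ _ hlt]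
      have : (l ++ [b])[j]'hlt = b := by
        rw [List.getElem_append_right (by omega)]
        simp [hlen]
      rw [this]
      exact hb


variable {G : Type*} [Group G]

/-- The inverse submonoid. -/
def Minv (N : Submonoid G) : Submonoid G where
  carrier := {x | x⁻¹ ∈ N}
  one_mem' := by simpa using N.one_mem
  mul_mem' := by
    intro a b ha hb
    simp only [Set.mem_setOf_eq, mul_inv_rev] at *
    exact N.mul_mem hb ha

@[simp] theorem mem_Minv {N : Submonoid G} {x : G} : x ∈ Minv N ↔ x⁻¹ ∈ N := Iff.rfl

@[simp] theorem Minv_Minv (N : Submonoid G) : Minv (Minv N) = N := by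
  ext x; simp

theorem coe_Minv (N : Submonoid G) : ((Minv N : Submonoid G) : Set G) = (N : Set G)⁻¹ := by
  ext x; simp [Set.mem_inv]

theorem coe_Minv_inv (N : Submonoid G) : ((Minv N : Submonoid G) : Set G)⁻¹ = (N : Set G) := by
  rw [coe_Minv]; simp



variable (H : Type) [Group H]

/-- The shift automorphism of `ℤ → H`. -/
def shiftAut (t : ℤ) : (ℤ → H) ≃* (ℤ → H) where
  toFun f := fun i => f (i - t)
  invFun f := fun i => f (i + t)
  left_inv f := by funext i; simp
  right_inv f := by funext i; simp
  map_mul' f g := rfl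

/-- The shift action as a homomorphism `Multiplicative ℤ →* MulAut (ℤ → H)`. -/
def shiftHom : Multiplicative ℤ →* MulAut (ℤ → H) where
  toFun t := shiftAut H t.toAdd
  map_one' := by
    ext f i
    show f (i - 0) = f i
    simp
  map_mul' t u := by
    ext f i
    show f (i - (t.toAdd + u.toAdd)) = f (i - t.toAdd - u.toAdd)
    rw [sub_sub]

/-- The ambient (unrestricted) wreath-type product. -/
abbrev Amb := (ℤ → H) ⋊[shiftHom H] Multiplicative ℤ

variable {H}

theorem mulSupport_shift (f : ℤ → H) (t : ℤ) :
    Function.mulSupport (fun i => f (i - t)) = (fun i : ℤ => i - t) ⁻¹' (Function.mulSupport f) :=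
  rfl

theorem shift_apply (t : Multiplicative ℤ) (f : ℤ → H) (i : ℤ) :
    (shiftHom H t) f i = f (i - t.toAdd) := rfl

variable (H)

/-- The finitely supported elements form a subgroup. -/
def Γ : Subgroup (Amb H) where
  carrier := {x | (Function.mulSupport x.left).Finite}
  one_mem' := by
    simp only [Set.mem_setOf_eq, SemidirectProduct.one_left]
    simpa using Set.finite_empty
  mul_mem' := by
    intro a b ha hb
    simp only [Set.mem_setOf_eq, SemidirectProduct.mul_left] at *
    have h2 : (Function.mulSupport (((shiftHom H) a.right) b.left)).Finite := by
      have : ((shiftHom H) a.right) b.left = fun i => b.left (i - a.right.toAdd) := rfl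
      rw [this, mulSupport_shift]
      exact Set.Finite.preimage (fun i _ j _ h => by omega) hb
    exact Set.Finite.subset (ha.union h2) (Function.mulSupport_mul _ _)
  inv_mem' := by
    intro a ha
    simp only [Set.mem_setOf_eq, SemidirectProduct.inv_left] at *
    have : ((shiftHom H) a.right⁻¹) a.left⁻¹ = fun i => (a.left (i - a.right⁻¹.toAdd))⁻¹ := rfl
    rw [this]
    have : Function.mulSupport (fun i => (a.left (i - a.right⁻¹.toAdd))⁻¹)
        = (fun i : ℤ => i - a.right⁻¹.toAdd) ⁻¹' (Function.mulSupport a.left) := by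
      ext i; simp [Function.mem_mulSupport]
    rw [this]
    exact Set.Finite.preimage (fun i _ j _ h => by omega) ha

variable {H}

/-- The group we work in: bounded (finite) support wreath-like product. -/
abbrev W := ↥(Γ H)

/-- The "load" of an element at slot `i`. -/
def ld (x : W (H := H)) (i : ℤ) : H := (x : Amb H).left i

/-- The "shift" of an element. -/
def sh (x : W (H := H)) : ℤ := ((x : Amb H).right).toAdd

@[simp] theorem ld_one (i : ℤ) : ld (1 : W (H := H)) i = 1 := rfl
@[simp] theorem sh_one : sh (1 : W (H := H)) = 0 := rfl

theorem ld_mul (x y : W (H := H)) (i : ℤ) :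
    ld (x * y) i = ld x i * ld y (i - sh x) := rfl

theorem sh_mul (x y : W (H := H)) : sh (x * y) = sh x + sh y := rfl

theorem ld_inv (x : W (H := H)) (i : ℤ) :
    ld x⁻¹ i = (ld x (i + sh x))⁻¹ := by
  show ((shiftHom H) (x : Amb H).right⁻¹) (x : Amb H).left⁻¹ i = _
  rw [shift_apply]
  simp only [Pi.inv_apply]
  have ht : Multiplicative.toAdd ((x : Amb H).right⁻¹) = -(sh x) := rfl
  rw [ht, sub_neg_eq_add]
  rfl

theorem sh_inv (x : W (H := H)) : sh x⁻¹ = -(sh x) := rfl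

/-- Constructor for elements of `W`. -/
def mk (f : ℤ → H) (t : ℤ) (hf : (Function.mulSupport f).Finite) : W (H := H) :=
  ⟨⟨f, Multiplicative.ofAdd t⟩, hf⟩

@[simp] theorem ld_mk (f : ℤ → H) (t : ℤ) (hf) (i : ℤ) : ld (mk f t hf) i = f i := rfl
@[simp] theorem sh_mk (f : ℤ → H) (t : ℤ) (hf) : sh (mk f t hf) = t := rfl

theorem W_ext {x y : W (H := H)} (hld : ∀ i, ld x i = ld y i) (hsh : sh x = sh y) : x = y := by
  apply Subtype.ext
  apply SemidirectProduct.ext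
  · funext i; exact hld i
  · exact hsh


section Monoids

variable {H : Type} [Group H]

/-- The right-windowed monoid: nonnegative shift, loads in `N` supported in `[0, ∞)`. -/
def Mo (N : Submonoid H) : Submonoid (W (H := H)) where
  carrier := {x | 0 ≤ sh x ∧ ∀ i, ld x i ∈ N ∧ (i < 0 → ld x i = 1)}
  one_mem' := ⟨by simp, fun i => ⟨by simpa using N.one_mem, fun _ => rfl⟩⟩
  mul_mem' := by
    intro a b ha hb
    obtain ⟨ha0, haC⟩ := ha
    obtain ⟨hb0, hbC⟩ := hb
    refine ⟨by rw [sh_mul]; omega, fun i => ?_⟩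
    rw [ld_mul]
    refine ⟨N.mul_mem (haC i).1 (hbC _).1, fun hi => ?_⟩
    rw [(haC i).2 hi, (hbC _).2 (by omega), one_mul]

/-- The left-windowed monoid: nonnegative shift, loads in `N` supported in `(-∞, sh]`. -/
def Mo' (N : Submonoid H) : Submonoid (W (H := H)) where
  carrier := {x | 0 ≤ sh x ∧ ∀ i, ld x i ∈ N ∧ (sh x < i → ld x i = 1)}
  one_mem' := ⟨by simp, fun i => ⟨by simpa using N.one_mem, fun _ => rfl⟩⟩
  mul_mem' := by
    intro a b ha hb
    obtain ⟨ha0, haC⟩ := ha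
    obtain ⟨hb0, hbC⟩ := hb
    refine ⟨by rw [sh_mul]; omega, fun i => ?_⟩
    rw [ld_mul]
    refine ⟨N.mul_mem (haC i).1 (hbC _).1, fun hi => ?_⟩
    rw [sh_mul] at hi
    rw [(haC i).2 (by omega), (hbC _).2 (by omega), one_mul]

theorem mem_Mo {N : Submonoid H} {x : W (H := H)} :
    x ∈ Mo N ↔ 0 ≤ sh x ∧ ∀ i, ld x i ∈ N ∧ (i < 0 → ld x i = 1) := Iff.rfl

theorem mem_Mo' {N : Submonoid H} {x : W (H := H)} :
    x ∈ Mo' N ↔ 0 ≤ sh x ∧ ∀ i, ld x i ∈ N ∧ (sh x < i → ld x i = 1) := Iff.rfl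

theorem ld_inv_eq (b : W (H := H)) (j : ℤ) : ld b j = (ld b⁻¹ (j + sh b⁻¹))⁻¹ := by
  have := ld_inv (x := b⁻¹) j
  rw [inv_inv] at this
  rw [this]

theorem ld_mem_Minv_of_inv_mem_Mo {N : Submonoid H} {b : W (H := H)}
    (hb : b⁻¹ ∈ Mo N) (j : ℤ) : ld b j ∈ Minv N := by
  rw [mem_Minv, ld_inv_eq b j, inv_inv]
  exact (hb.2 _).1

theorem ld_mem_Minv_of_inv_mem_Mo' {N : Submonoid H} {b : W (H := H)}
    (hb : b⁻¹ ∈ Mo' N) (j : ℤ) : ld b j ∈ Minv N := by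
  rw [mem_Minv, ld_inv_eq b j, inv_inv]
  exact (hb.2 _).1

/-- Key invariant: loads at negative slots of a `k`-fold alternating product of `Mo N`
lie in the `(k-1)`-fold alternating product of `N⁻¹`. -/
theorem ld_neg_mem_of_mem_altProd_Mo {N : Submonoid H} :
    ∀ (k : ℕ) (x : W (H := H)), x ∈ altProd ((Mo N : Submonoid _) : Set _) k →
    ∀ i : ℤ, i < 0 → ld x i ∈ altProd ((Minv N : Submonoid H) : Set H) (k - 1) := by
  intro k
  induction k with
  | zero =>
    intro x hx i _
    have : x = 1 := by simpa [altProd] using hx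
    subst this
    simp [altProd]
  | succ m ih =>
    intro x hx i hi
    rw [altProd_succ] at hx
    obtain ⟨a, ha, b, hb, hab⟩ := hx
    subst hab
    rw [ld_mul]
    rcases Nat.eq_zero_or_pos m with hm | hm
    · subst hm
      have hbM : b ∈ Mo N := by simpa using hb
      have ha1 : a = 1 := by simpa [altProd] using ha
      subst ha1
      simp only [ld_one, one_mul, sh_one, sub_zero]
      rw [(hbM.2 i).2 hi]
      simp [altProd]
    · obtain ⟨m', rfl⟩ := Nat.exists_eq_succ_of_ne_zero (Nat.pos_iff_ne_zero.mp hm)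
      have hIH : ld a i ∈ altProd ((Minv N : Submonoid H) : Set H) m' := by
        simpa using ih a ha i hi
      have hkk : (m' + 1 + 1) - 1 = m' + 1 := rfl
      rw [hkk, altProd_succ]
      refine ⟨_, hIH, ld b (i - sh a), ?_, rfl⟩
      by_cases hev : Even m'
      · -- factor is Minv N ; b is in (Mo N)⁻¹ since m'+1 is odd
        rw [if_pos hev]
        have hodd : ¬ Even (m' + 1) := by simp [Nat.even_add_one, hev]
        rw [if_neg hodd, Set.mem_inv] at hb
        exact ld_mem_Minv_of_inv_mem_Mo hb _
      · rw [if_neg hev, coe_Minv_inv]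
        have hevs : Even (m' + 1) := Nat.even_add_one.mpr hev
        rw [if_pos hevs] at hb
        exact ((mem_Mo.mp hb).2 _).1

/-- Trivial invariant for `Mo'`: every load of a `k`-fold alternating product of `Mo' N`
lies in the `k`-fold alternating product of `N`. -/
theorem ld_mem_of_mem_altProd_Mo' {N : Submonoid H} :
    ∀ (k : ℕ) (x : W (H := H)), x ∈ altProd ((Mo' N : Submonoid _) : Set _) k →
    ∀ i : ℤ, ld x i ∈ altProd (N : Set H) k := by
  intro k
  induction k with
  | zero =>
    intro x hx i
    have : x = 1 := by simpa [altProd] using hx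
    subst this
    simp [altProd]
  | succ m ih =>
    intro x hx i
    rw [altProd_succ] at hx
    obtain ⟨a, ha, b, hb, hab⟩ := hx
    subst hab
    rw [ld_mul, altProd_succ]
    refine ⟨_, ih a ha i, ld b (i - sh a), ?_, rfl⟩
    by_cases hev : Even m
    · rw [if_pos hev]
      rw [if_pos hev] at hb
      exact ((mem_Mo'.mp hb).2 _).1
    · rw [if_neg hev]
      rw [if_neg hev, Set.mem_inv] at hb
      rw [Set.mem_inv, SetLike.mem_coe, ← mem_Minv]
      exact ld_mem_Minv_of_inv_mem_Mo' hb _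

/-- Blocking lemma for `Mo` at even stages. -/
theorem altProd_Mo_ne_univ_of_even {N : Submonoid H} {k : ℕ} (hk : Even k)
    (hne : altProd ((Minv N : Submonoid H) : Set H) (k - 2) ≠ Set.univ) :
    altProd ((Mo N : Submonoid _) : Set (W (H := H))) k ≠ Set.univ := by
  obtain ⟨ζ, hζ⟩ : ∃ ζ : H, ζ ∉ altProd ((Minv N : Submonoid H) : Set H) (k - 2) := by
    by_contra hc
    push_neg at hc
    exact hne (Set.eq_univ_of_forall hc)
  intro hfull
  set f : ℤ → H := fun i => if i = -2 then ζ else 1 with hf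
  have hsupp : (Function.mulSupport f).Finite := by
    apply Set.Finite.subset (Set.finite_singleton (-2 : ℤ))
    intro i hi
    simp only [Function.mem_mulSupport, hf] at hi
    by_contra hc
    simp_all
  have hx : mk f (-1) hsupp ∈ altProd ((Mo N : Submonoid _) : Set (W (H := H))) k := by
    rw [hfull]; trivial
  rcases Nat.eq_zero_or_pos k with h0 | hpos
  · subst h0
    have : mk f (-1) hsupp = 1 := by simpa [altProd] using hx
    have : ld (mk f (-1) hsupp) (-2) = 1 := by rw [this]; simp
    rw [ld_mk] at this
    simp only [hf, if_pos rfl] at this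
    subst this
    exact hζ (one_mem_altProd (by simpa using (Minv N).one_mem) _)
  · obtain ⟨m, rfl⟩ := Nat.exists_eq_succ_of_ne_zero (Nat.pos_iff_ne_zero.mp hpos)
    have hmodd : ¬ Even m := by
      intro h; rw [Nat.even_add_one] at hk; exact hk h
    rw [altProd_succ, if_neg hmodd] at hx
    obtain ⟨a, ha, b, hb, hab⟩ := hx
    replace hab : a * b = mk f (-1) hsupp := hab
    rw [Set.mem_inv] at hb
    have hbM : b⁻¹ ∈ Mo N := hb
    -- compute the load at -2
    have hsh : sh a + sh b = -1 := by
      have : sh (a * b) = -1 := by rw [hab]; simp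
      rw [sh_mul] at this; omega
    have hshb : sh b = - sh b⁻¹ := by rw [sh_inv]; ring
    have hb1 : ld b (-2 - sh a) = 1 := by
      rw [ld_inv_eq b]
      have hslot : (-2 - sh a) + sh b⁻¹ < 0 := by
        rw [sh_inv]
        have := hbM.1
        rw [sh_inv] at this
        omega
      rw [(hbM.2 _).2 hslot]
      simp
    have hload : ld (a * b) (-2) = ld a (-2) := by
      rw [ld_mul, hb1, mul_one]
    have : ζ = ld a (-2) := by
      rw [← hload, hab, ld_mk]
      simp [hf]
    rw [this] at hζ
    have : ld a (-2) ∈ altProd ((Minv N : Submonoid H) : Set H) (m - 1) :=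
      ld_neg_mem_of_mem_altProd_Mo m a ha (-2) (by omega)
    have hm1 : m - 1 = (m + 1) - 2 := by omega
    rw [hm1] at this
    exact hζ this

/-- Blocking lemma for `Mo'` at odd stages. -/
theorem altProd_Mo'_ne_univ_of_odd {N : Submonoid H} {k : ℕ} (hk : ¬ Even k)
    (hne : altProd (N : Set H) (k - 1) ≠ Set.univ) :
    altProd ((Mo' N : Submonoid _) : Set (W (H := H))) k ≠ Set.univ := by
  obtain ⟨ζ, hζ⟩ : ∃ ζ : H, ζ ∉ altProd (N : Set H) (k - 1) := by
    by_contra hc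
    push_neg at hc
    exact hne (Set.eq_univ_of_forall hc)
  intro hfull
  set f : ℤ → H := fun i => if i = 1 then ζ else 1 with hf
  have hsupp : (Function.mulSupport f).Finite := by
    apply Set.Finite.subset (Set.finite_singleton (1 : ℤ))
    intro i hi
    simp only [Function.mem_mulSupport, hf] at hi
    by_contra hc
    simp_all
  have hx : mk f 0 hsupp ∈ altProd ((Mo' N : Submonoid _) : Set (W (H := H))) k := by
    rw [hfull]; trivial
  rcases Nat.eq_zero_or_pos k with h0 | hpos
  · subst h0; exact hk (Even.zero)
  · obtain ⟨m, rfl⟩ := Nat.exists_eq_succ_of_ne_zero (Nat.pos_iff_ne_zero.mp hpos)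
    have hmev : Even m := by
      rcases Nat.even_or_odd m with h | h
      · exact h
      · exfalso; exact hk (Nat.even_add_one.mpr (Nat.not_even_iff_odd.mpr h))
    rw [altProd_succ, if_pos hmev] at hx
    obtain ⟨a, ha, b, hb, hab⟩ := hx
    replace hab : a * b = mk f 0 hsupp := hab
    have hbM : b ∈ Mo' N := hb
    have hsh : sh a + sh b = 0 := by
      have : sh (a * b) = 0 := by rw [hab]; simp
      rw [sh_mul] at this; omega
    have hb1 : ld b (1 - sh a) = 1 := by
      refine (hbM.2 _).2 ?_
      omega
    have hload : ld (a * b) 1 = ld a 1 := by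
      rw [ld_mul, hb1, mul_one]
    have : ζ = ld a 1 := by
      rw [← hload, hab, ld_mk]
      simp [hf]
    rw [this] at hζ
    have : ld a 1 ∈ altProd (N : Set H) m := ld_mem_of_mem_altProd_Mo' m a ha 1
    exact hζ (by simpa using this)

end Monoids

section Fullness

variable {H : Type} [Group H]

theorem one_mem_alt_set (N : Submonoid H) (j : ℕ) :
    (1:H) ∈ (if Even j then (N : Set H) else (N : Set H)⁻¹) := by
  split
  · simpa using N.one_mem
  · rw [Set.mem_inv]; simpa using N.one_mem

theorem getD_replicate_one (k j : ℕ) : (List.replicate k (1:H)).getD j 1 = 1 := by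
  rcases lt_or_ge j k with hj | hj
  · rw [List.getD_eq_getElem _ _ (by simpa using hj)]
    simp
  · rw [List.getD_eq_default _ _ (by simpa using hj)]

/-- Generic construction: a family of per-slot alternating lists with a common shift pattern
assembles into a member of `altProd` of a submonoid of `W`. -/
theorem chain_mem_altProd (M' : Submonoid (W (H := H))) (k : ℕ)
    (lst : ℤ → List H) (s : ℕ → ℤ)
    (hlen : ∀ i, (lst i).length = k)
    (htriv : {i : ℤ | lst i ≠ List.replicate k 1}.Finite)
    (hs0 : s 0 = 0)
    (hfac : ∀ j, j < k → ∀ x : W (H := H),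
      (∀ i, ld x i = (lst (i + s j)).getD j 1) → sh x = s (j+1) - s j →
      (if Even j then x ∈ M' else x⁻¹ ∈ M')) :
    ∀ hfin, mk (fun i => (lst i).prod) (s k) hfin ∈ altProd ((M' : Submonoid _) : Set (W (H := H))) k := by
  -- partial loads
  set Pl : ℕ → ℤ → H := fun j i => ((lst i).take j).prod with hPl
  have hPl_triv : ∀ j i, lst i = List.replicate k 1 → Pl j i = 1 := by
    intro j i h
    simp only [hPl, h, List.take_replicate, List.prod_replicate, one_pow]
  have hPfin : ∀ j, (Function.mulSupport (Pl j)).Finite := by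
    intro j
    apply Set.Finite.subset htriv
    intro i hi
    simp only [Function.mem_mulSupport] at hi
    intro hc
    exact hi (hPl_triv j i hc)
  set P : ℕ → W (H := H) := fun j => mk (Pl j) (s j) (hPfin j) with hP
  have hP0 : P 0 = 1 := by
    apply W_ext
    · intro i
      simp [hP, hPl]
    · simp [hP, hs0]
  have hcompfin : ∀ j : ℕ,
      (Function.mulSupport (fun i => (lst (i + s j)).getD j 1)).Finite := by
    intro j
    apply Set.Finite.subset (Set.Finite.preimage (f := fun i : ℤ => i + s j)
      ((add_left_injective (s j)).injOn) htriv)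
    intro i hi
    simp only [Function.mem_mulSupport] at hi
    intro hc
    simp only [Set.mem_preimage, Set.mem_setOf_eq, not_not] at hc
    exact hi (by rw [hc]; exact getD_replicate_one k j)
  -- the factors
  set q : ℕ → W (H := H) := fun j =>
    mk (fun i => (lst (i + s j)).getD j 1) (s (j+1) - s j) (hcompfin j) with hq
  have hstep : ∀ j, j < k → P (j+1) = P j * q j := by
    intro j hj
    apply W_ext
    · intro i
      rw [ld_mul]
      simp only [hP, hq, ld_mk, sh_mk]
      have hidx : j < (lst i).length := by rw [hlen i]; exact hj
      have h1 : Pl (j+1) i = Pl j i * (lst i)[j] := List.prod_take_succ (lst i) j hidx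
      rw [h1]
      congr 1
      rw [show (i - s j) + s j = i by ring, List.getD_eq_getElem _ _ hidx]
    · simp only [hP, hq, sh_mk, sh_mul]
      ring
  have hmain : ∀ j, j ≤ k → P j ∈ altProd ((M' : Submonoid _) : Set (W (H := H))) j := by
    intro j
    induction j with
    | zero => intro _; rw [hP0]; simp [altProd]
    | succ j ih =>
      intro hjk
      have hj : j < k := by omega
      rw [altProd_succ, hstep j hj]
      refine ⟨P j, ih (by omega), q j, ?_, rfl⟩
      have := hfac j hj (q j) (fun i => by simp [hq]) (by simp [hq])
      by_cases hev : Even j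
      · rw [if_pos hev]
        rw [if_pos hev] at this
        exact this
      · rw [if_neg hev]
        rw [if_neg hev] at this
        rw [Set.mem_inv]
        exact this
  intro hfin
  have hPk : mk (fun i => (lst i).prod) (s k) hfin = P k := by
    apply W_ext
    · intro i
      simp only [hP, ld_mk, hPl]
      rw [List.take_of_length_le (le_of_eq (hlen i))]
    · simp only [hP, sh_mk]
  rw [hPk]
  exact hmain k le_rfl

/-- Fullness of `Mo N` at odd stages `k ≥ 3`. -/
theorem altProd_Mo_univ {N : Submonoid H} {k : ℕ} (hk : ¬ Even k) (hk3 : 3 ≤ k)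
    (hN : altProd (N : Set H) k = Set.univ)
    (hNi : altProd ((Minv N : Submonoid H) : Set H) (k - 1) = Set.univ) :
    altProd ((Mo N : Submonoid _) : Set (W (H := H))) k = Set.univ := by
  classical
  apply Set.eq_univ_of_forall
  intro x
  obtain ⟨B, hB0, hBm, hBsupp⟩ : ∃ B : ℤ, 0 ≤ B ∧ -B ≤ sh x ∧ ∀ i : ℤ, i ≤ -B → ld x i = 1 := by
    have hfin : (Function.mulSupport (fun i => ld x i)).Finite := x.2
    obtain ⟨a, ha⟩ := hfin.bddBelow
    refine ⟨max (max 0 (-(sh x))) (1 - a), ?_, ?_, ?_⟩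
    · exact le_max_of_le_left (le_max_left _ _)
    · have := le_max_of_le_left (α := ℤ) (c := 1 - a) (le_max_right 0 (-(sh x)))
      omega
    · intro i hi
      by_contra hne
      have hmem : i ∈ Function.mulSupport (fun i => ld x i) := hne
      have hai := ha hmem
      have := le_max_right (α := ℤ) (max 0 (-(sh x))) (1 - a)
      omega
  have hLex : ∀ h : H, ∃ l : List H, l.length = k ∧
      (∀ j, l.getD j 1 ∈ (if Even j then (N : Set H) else (N : Set H)⁻¹)) ∧ l.prod = h := by
    intro h
    obtain ⟨l, hlen, hmem, hprod⟩ :=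
      exists_chain (show h ∈ altProd (N : Set H) k by rw [hN]; trivial)
    refine ⟨l, hlen, fun j => ?_, hprod⟩
    rcases lt_or_ge j l.length with hj | hj
    · exact hmem j hj
    · rw [List.getD_eq_default _ _ hj]; exact one_mem_alt_set N j
  have hKex : ∀ h : H, ∃ l : List H, l.length = k - 1 ∧
      (∀ j, l.getD j 1 ∈ (if Even j then ((Minv N : Submonoid H) : Set H)
        else ((Minv N : Submonoid H) : Set H)⁻¹)) ∧ l.prod = h := by
    intro h
    obtain ⟨l, hlen, hmem, hprod⟩ :=
      exists_chain (show h ∈ altProd ((Minv N : Submonoid H) : Set H) (k-1) by rw [hNi]; trivial)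
    refine ⟨l, hlen, fun j => ?_, hprod⟩
    rcases lt_or_ge j l.length with hj | hj
    · exact hmem j hj
    · rw [List.getD_eq_default _ _ hj]; exact one_mem_alt_set (Minv N) j
  choose Lf hLlen hLmem hLprod using hLex
  choose Kf hKlen hKmem hKprod using hKex
  set lst : ℤ → List H := fun i =>
    if ld x i = 1 then List.replicate k 1
    else if 0 ≤ i then Lf (ld x i) else 1 :: Kf (ld x i) with hlst
  have hlen : ∀ i, (lst i).length = k := by
    intro i
    simp only [hlst]
    split
    · simp
    · split
      · exact hLlen _
      · simp only [List.length_cons, hKlen]; omega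
  have htriv : {i : ℤ | lst i ≠ List.replicate k 1}.Finite := by
    apply Set.Finite.subset x.2
    intro i hi
    simp only [Set.mem_setOf_eq, hlst] at hi
    rw [Function.mem_mulSupport]
    intro hc
    apply hi
    rw [if_pos (show ld x i = 1 from hc)]
  set s : ℕ → ℤ := fun j => if j = 0 then 0 else if j = k then sh x
    else if Even j then -B else B with hs
  have hs0 : s 0 = 0 := by simp [hs]
  have hsk : s k = sh x := by
    have hne : ¬ k = 0 := by omega
    simp [hs, hne]
  have hsodd : ∀ j, j ≠ 0 → j ≠ k → ¬ Even j → s j = B := by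
    intro j h1 h2 h3
    simp only [hs]
    rw [if_neg h1, if_neg h2, if_neg h3]
  have hseven : ∀ j, j ≠ 0 → Even j → s j = -B := by
    intro j h1 h2
    simp only [hs]
    rw [if_neg h1, if_neg (show ¬ j = k from fun hk' => hk (hk' ▸ h2)), if_pos h2]
  have hcomp0 : ∀ i : ℤ, i < 0 → (lst i).getD 0 1 = 1 := by
    intro i hi
    simp only [hlst]
    split
    · exact getD_replicate_one k 0
    · rw [if_neg (by omega)]; rfl
  have hcomp_triv : ∀ (j : ℕ) (i : ℤ), ld x i = 1 → (lst i).getD j 1 = 1 := by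
    intro j i h
    simp only [hlst, if_pos h]
    exact getD_replicate_one k j
  have hmemN : ∀ (j : ℕ) (i : ℤ),
      (lst i).getD j 1 ∈ (if Even j then (N : Set H) else (N : Set H)⁻¹) := by
    intro j i
    by_cases hld1 : ld x i = 1
    · rw [show lst i = List.replicate k 1 from by rw [hlst]; simp only [if_pos hld1]]
      rw [getD_replicate_one]
      exact one_mem_alt_set N j
    · by_cases hi0 : (0:ℤ) ≤ i
      · rw [show lst i = Lf (ld x i) from by rw [hlst]; simp only [if_neg hld1, if_pos hi0]]
        exact hLmem _ j
      · rw [show lst i = 1 :: Kf (ld x i) from by rw [hlst]; simp only [if_neg hld1, if_neg hi0]]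
        rcases Nat.eq_zero_or_pos j with rfl | hj0
        · rw [show ((1:H) :: Kf (ld x i)).getD 0 1 = 1 from rfl]
          exact one_mem_alt_set N 0
        · obtain ⟨j', rfl⟩ := Nat.exists_eq_succ_of_ne_zero (Nat.pos_iff_ne_zero.mp hj0)
          rw [show ((1:H) :: Kf (ld x i)).getD (j'+1) 1 = (Kf (ld x i)).getD j' 1 from rfl]
          have hmem := hKmem (ld x i) j'
          by_cases hev : Even j'
          · rw [if_pos hev, coe_Minv] at hmem
            rw [if_neg (by simp [Nat.even_add_one, hev])]
            exact hmem
          · rw [if_neg hev, coe_Minv_inv] at hmem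
            rw [if_pos (Nat.even_add_one.mpr hev)]
            exact hmem
  have hfac : ∀ j, j < k → ∀ y : W (H := H),
      (∀ i, ld y i = (lst (i + s j)).getD j 1) → sh y = s (j+1) - s j →
      (if Even j then y ∈ Mo N else y⁻¹ ∈ Mo N) := by
    intro j hj y hld hsh
    by_cases hev : Even j
    · rw [if_pos hev, mem_Mo]
      constructor
      · rw [hsh]
        rcases Nat.eq_zero_or_pos j with rfl | hj0
        · rw [hs0, hsodd 1 (by omega) (by omega) (by simp)]
          omega
        · rw [hseven j (by omega) hev]
          by_cases hjk : j + 1 = k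
          · rw [hjk, hsk]; omega
          · rw [hsodd (j+1) (by omega) hjk (by simp [Nat.even_add_one, hev])]
            omega
      · intro i
        constructor
        · have := hmemN j (i + s j)
          rw [if_pos hev] at this
          rw [hld i]
          exact SetLike.mem_coe.mp this
        · intro hi
          rw [hld i]
          rcases Nat.eq_zero_or_pos j with rfl | hj0
          · rw [hs0, add_zero]
            exact hcomp0 i hi
          · rw [hseven j (by omega) hev]
            exact hcomp_triv _ _ (hBsupp _ (by omega))
    · rw [if_neg hev, mem_Mo]
      have hj0 : j ≠ 0 := by rintro rfl; exact hev Even.zero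
      have hsj : s j = B := hsodd j hj0 (by omega) hev
      have hsj1 : s (j+1) = -B := hseven (j+1) (by omega) (Nat.even_add_one.mpr hev)
      have hy : ∀ i, ld y⁻¹ i = ((lst (i + s (j+1))).getD j 1)⁻¹ := by
        intro i
        rw [ld_inv, hld]
        congr 2
        rw [hsh]
        ring
      constructor
      · rw [sh_inv, hsh, hsj, hsj1]
        omega
      · intro i
        constructor
        · rw [hy i]
          have := hmemN j (i + s (j+1))
          rw [if_neg hev, Set.mem_inv] at this
          exact SetLike.mem_coe.mp this
        · intro hi
          rw [hy i, hcomp_triv _ _ (hBsupp _ (by rw [hsj1]; omega))]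
          exact inv_one
  have hfin : (Function.mulSupport (fun i => (lst i).prod)).Finite := by
    apply Set.Finite.subset htriv
    intro i hi
    simp only [Function.mem_mulSupport] at hi
    intro hc
    rw [hc] at hi
    simp at hi
  have hres := chain_mem_altProd (Mo N) k lst s hlen htriv hs0 hfac hfin
  have hxeq : mk (fun i => (lst i).prod) (s k) hfin = x := by
    apply W_ext
    · intro i
      rw [ld_mk]
      simp only [hlst]
      split
      · rw [List.prod_replicate, one_pow]
        exact (‹ld x i = 1›).symm
      · split
        · exact hLprod _
        · rw [List.prod_cons, one_mul]
          exact hKprod _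
    · rw [sh_mk, hsk]
  rw [← hxeq]
  exact hres

/-- Fullness of `Mo' N` at even stages `k ≥ 2`. -/
theorem altProd_Mo'_univ {N : Submonoid H} {k : ℕ} (hk : Even k) (hk0 : k ≠ 0)
    (hN : altProd (N : Set H) k = Set.univ) :
    altProd ((Mo' N : Submonoid _) : Set (W (H := H))) k = Set.univ := by
  classical
  apply Set.eq_univ_of_forall
  intro x
  obtain ⟨B, hB0, hBm, hBsupp⟩ : ∃ B : ℤ, 0 ≤ B ∧ sh x ≤ B ∧ ∀ i : ℤ, B ≤ i → ld x i = 1 := by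
    have hfin : (Function.mulSupport (fun i => ld x i)).Finite := x.2
    obtain ⟨a, ha⟩ := hfin.bddAbove
    refine ⟨max (max 0 (sh x)) (1 + a), ?_, ?_, ?_⟩
    · exact le_max_of_le_left (le_max_left _ _)
    · exact le_max_of_le_left (le_max_right _ _)
    · intro i hi
      by_contra hne
      have hmem : i ∈ Function.mulSupport (fun i => ld x i) := hne
      have hai := ha hmem
      have := le_max_right (α := ℤ) (max 0 (sh x)) (1 + a)
      omega
  have hLex : ∀ h : H, ∃ l : List H, l.length = k ∧
      (∀ j, l.getD j 1 ∈ (if Even j then (N : Set H) else (N : Set H)⁻¹)) ∧ l.prod = h := by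
    intro h
    obtain ⟨l, hlen, hmem, hprod⟩ :=
      exists_chain (show h ∈ altProd (N : Set H) k by rw [hN]; trivial)
    refine ⟨l, hlen, fun j => ?_, hprod⟩
    rcases lt_or_ge j l.length with hj | hj
    · exact hmem j hj
    · rw [List.getD_eq_default _ _ hj]; exact one_mem_alt_set N j
  choose Lf hLlen hLmem hLprod using hLex
  set lst : ℤ → List H := fun i =>
    if ld x i = 1 then List.replicate k 1 else Lf (ld x i) with hlst
  have hlen : ∀ i, (lst i).length = k := by
    intro i
    simp only [hlst]
    split
    · simp
    · exact hLlen _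
  have htriv : {i : ℤ | lst i ≠ List.replicate k 1}.Finite := by
    apply Set.Finite.subset x.2
    intro i hi
    simp only [Set.mem_setOf_eq, hlst] at hi
    rw [Function.mem_mulSupport]
    intro hc
    apply hi
    rw [if_pos (show ld x i = 1 from hc)]
  set s : ℕ → ℤ := fun j => if j = 0 then 0 else if Even j then sh x else B with hs
  have hs0 : s 0 = 0 := by simp [hs]
  have hseven : ∀ j, j ≠ 0 → Even j → s j = sh x := by
    intro j h1 h2
    simp only [hs]
    rw [if_neg h1, if_pos h2]
  have hsodd : ∀ j, ¬ Even j → s j = B := by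
    intro j h2
    have h1 : j ≠ 0 := by rintro rfl; exact h2 Even.zero
    simp only [hs]
    rw [if_neg h1, if_neg h2]
  have hsk : s k = sh x := hseven k hk0 hk
  have hcomp_triv : ∀ (j : ℕ) (i : ℤ), ld x i = 1 → (lst i).getD j 1 = 1 := by
    intro j i h
    simp only [hlst, if_pos h]
    exact getD_replicate_one k j
  have hmemN : ∀ (j : ℕ) (i : ℤ),
      (lst i).getD j 1 ∈ (if Even j then (N : Set H) else (N : Set H)⁻¹) := by
    intro j i
    by_cases hld1 : ld x i = 1
    · rw [show lst i = List.replicate k 1 from by rw [hlst]; simp only [if_pos hld1]]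
      rw [getD_replicate_one]
      exact one_mem_alt_set N j
    · rw [show lst i = Lf (ld x i) from by rw [hlst]; simp only [if_neg hld1, if_true]]
      exact hLmem _ j
  have hfac : ∀ j, j < k → ∀ y : W (H := H),
      (∀ i, ld y i = (lst (i + s j)).getD j 1) → sh y = s (j+1) - s j →
      (if Even j then y ∈ Mo' N else y⁻¹ ∈ Mo' N) := by
    intro j hj y hld hsh
    by_cases hev : Even j
    · rw [if_pos hev, mem_Mo']
      have hsj1 : s (j+1) = B := hsodd (j+1) (by simp [Nat.even_add_one, hev])
      have hsj : s j ≤ B := by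
        rcases Nat.eq_zero_or_pos j with rfl | hj0
        · rw [hs0]; omega
        · rw [hseven j (by omega) hev]; omega
      constructor
      · rw [hsh, hsj1]; omega
      · intro i
        constructor
        · have := hmemN j (i + s j)
          rw [if_pos hev] at this
          rw [hld i]
          exact SetLike.mem_coe.mp this
        · intro hi
          rw [hsh, hsj1] at hi
          rw [hld i]
          exact hcomp_triv _ _ (hBsupp _ (by omega))
    · rw [if_neg hev, mem_Mo']
      have hj0 : j ≠ 0 := by rintro rfl; exact hev Even.zero
      have hsj : s j = B := hsodd j hev
      have hsj1 : s (j+1) = sh x := hseven (j+1) (by omega) (Nat.even_add_one.mpr hev)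
      have hy : ∀ i, ld y⁻¹ i = ((lst (i + s (j+1))).getD j 1)⁻¹ := by
        intro i
        rw [ld_inv, hld]
        congr 2
        rw [hsh]
        ring
      constructor
      · rw [sh_inv, hsh, hsj, hsj1]
        omega
      · intro i
        constructor
        · rw [hy i]
          have := hmemN j (i + s (j+1))
          rw [if_neg hev, Set.mem_inv] at this
          exact SetLike.mem_coe.mp this
        · intro hi
          rw [sh_inv, hsh, hsj, hsj1] at hi
          rw [hy i, hcomp_triv _ _ (hBsupp _ (by rw [hsj1]; omega))]
          exact inv_one
  have hfin : (Function.mulSupport (fun i => (lst i).prod)).Finite := by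
    apply Set.Finite.subset htriv
    intro i hi
    simp only [Function.mem_mulSupport] at hi
    intro hc
    rw [hc] at hi
    simp at hi
  have hres := chain_mem_altProd (Mo' N) k lst s hlen htriv hs0 hfac hfin
  have hxeq : mk (fun i => (lst i).prod) (s k) hfin = x := by
    apply W_ext
    · intro i
      rw [ld_mk]
      simp only [hlst]
      split
      · rw [List.prod_replicate, one_pow]
        exact (‹ld x i = 1›).symm
      · exact hLprod _
    · rw [sh_mk, hsk]
  rw [← hxeq]
  exact hres

end Fullness

section Transport

variable {G : Type*} [Group G]

theorem image_altProd (e : G ≃* G) (M : Set G) (k : ℕ) :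
    ⇑e '' altProd M k = altProd (⇑e '' M) k := by
  induction k with
  | zero =>
    show ⇑e '' {1} = {1}
    rw [Set.image_singleton, map_one]
  | succ m ih =>
    rw [altProd_succ, altProd_succ, Set.image_mul, ih]
    congr 1
    split
    · rfl
    · ext y
      constructor
      · rintro ⟨z, hz, rfl⟩
        rw [Set.mem_inv] at hz ⊢
        exact ⟨z⁻¹, hz, by rw [map_inv]⟩
      · intro hy
        rw [Set.mem_inv] at hy
        obtain ⟨z, hz, hez⟩ := hy
        exact ⟨z⁻¹, by rwa [Set.mem_inv, inv_inv], by rw [map_inv, hez, inv_inv]⟩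

theorem altProd_map_univ_iff (e : G ≃* G) (M : Submonoid G) (k : ℕ) :
    altProd ((M.map e.toMonoidHom : Submonoid G) : Set G) k = Set.univ ↔
      altProd ((M : Submonoid G) : Set G) k = Set.univ := by
  have hco : ((M.map e.toMonoidHom : Submonoid G) : Set G) = ⇑e '' (M : Set G) := rfl
  rw [hco, ← image_altProd]
  constructor
  · intro h
    apply Set.eq_univ_of_forall
    intro x
    have : e x ∈ ⇑e '' altProd (↑M) k := by rw [h]; trivial
    obtain ⟨y, hy, hxy⟩ := this
    rwa [← e.injective hxy]
  · intro h
    rw [h]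
    apply Set.eq_univ_of_forall
    intro x
    exact ⟨e.symm x, trivial, e.apply_symm_apply x⟩

end Transport

section Psi

variable {H : Type} [Group H]

theorem flip_fin (x : W (H := H)) : (Function.mulSupport (fun i => ld x (-i))).Finite := by
  have hfin : (Function.mulSupport (fun i => ld x i)).Finite := x.2
  apply Set.Finite.subset (Set.Finite.preimage (f := fun i : ℤ => -i)
    ((neg_injective).injOn) hfin)
  intro i hi
  exact hi

/-- The flip automorphism of `W`. -/
def psiW : W (H := H) ≃* W (H := H) where
  toFun x := mk (fun i => ld x (-i)) (-(sh x)) (flip_fin x)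
  invFun x := mk (fun i => ld x (-i)) (-(sh x)) (flip_fin x)
  left_inv x := by
    apply W_ext
    · intro i; simp
    · simp
  right_inv x := by
    apply W_ext
    · intro i; simp
    · simp
  map_mul' x y := by
    apply W_ext
    · intro i
      rw [ld_mul]
      simp only [ld_mk, sh_mk, ld_mul]
      congr 1
      congr 1
      ring
    · rw [sh_mul]
      simp only [sh_mk, sh_mul]
      ring

@[simp] theorem ld_psiW (x : W (H := H)) (i : ℤ) : ld (psiW x) i = ld x (-i) := rfl
@[simp] theorem sh_psiW (x : W (H := H)) : sh (psiW x) = -(sh x) := rfl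

theorem psiW_psiW (x : W (H := H)) : psiW (psiW x) = x := by
  apply W_ext
  · intro i; simp
  · simp

theorem Minv_Mo (N : Submonoid H) :
    Minv (Mo N) = (Mo' (Minv N)).map (psiW (H := H)).toMonoidHom := by
  ext x
  rw [mem_Minv, Submonoid.mem_map]
  constructor
  · intro hx
    refine ⟨psiW x, ?_, psiW_psiW x⟩
    rw [mem_Mo']
    obtain ⟨h0, hC⟩ := mem_Mo.mp hx
    rw [sh_inv] at h0
    refine ⟨by simp; omega, fun i => ?_⟩
    constructor
    · rw [ld_psiW, mem_Minv]
      have := (hC (-i - sh x)).1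
      rw [ld_inv] at this
      convert this using 3
      ring
    · intro hi
      rw [sh_psiW] at hi
      rw [ld_psiW]
      have := (hC (-i - sh x)).2 (by omega)
      rw [ld_inv] at this
      have h2 : ld x (-i - sh x + sh x) = 1 := by
        rw [← inv_inv (ld x _), this, inv_one]
      convert h2 using 2
      ring
  · rintro ⟨y, hy, rfl⟩
    rw [show (psiW (H := H)).toMonoidHom y = psiW y from rfl]
    obtain ⟨h0, hC⟩ := mem_Mo'.mp hy
    rw [mem_Mo]
    refine ⟨by rw [sh_inv, sh_psiW]; omega, fun i => ?_⟩
    constructor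
    · rw [ld_inv, ld_psiW]
      have := (hC (-(i + sh (psiW y)))).1
      rw [mem_Minv] at this
      exact this
    · intro hi
      rw [ld_inv, ld_psiW]
      have := (hC (-(i + sh (psiW y)))).2 (by simp; omega)
      rw [this, inv_one]

theorem Minv_Mo' (N : Submonoid H) :
    Minv (Mo' N) = (Mo (Minv N)).map (psiW (H := H)).toMonoidHom := by
  ext x
  rw [mem_Minv, Submonoid.mem_map]
  constructor
  · intro hx
    refine ⟨psiW x, ?_, psiW_psiW x⟩
    rw [mem_Mo]
    obtain ⟨h0, hC⟩ := mem_Mo'.mp hx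
    rw [sh_inv] at h0
    refine ⟨by simp; omega, fun i => ?_⟩
    constructor
    · rw [ld_psiW, mem_Minv]
      have := (hC (-i - sh x)).1
      rw [ld_inv] at this
      convert this using 3
      ring
    · intro hi
      rw [ld_psiW]
      have := (hC (-i - sh x)).2 (by rw [sh_inv]; omega)
      rw [ld_inv] at this
      have h2 : ld x (-i - sh x + sh x) = 1 := by
        rw [← inv_inv (ld x _), this, inv_one]
      convert h2 using 2
      ring
  · rintro ⟨y, hy, rfl⟩
    rw [show (psiW (H := H)).toMonoidHom y = psiW y from rfl]
    obtain ⟨h0, hC⟩ := mem_Mo.mp hy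
    rw [mem_Mo']
    refine ⟨by rw [sh_inv, sh_psiW]; omega, fun i => ?_⟩
    constructor
    · rw [ld_inv, ld_psiW]
      have := (hC (-(i + sh (psiW y)))).1
      rw [mem_Minv] at this
      exact this
    · intro hi
      rw [sh_inv, sh_psiW] at hi
      rw [ld_inv, ld_psiW]
      have := (hC (-(i + sh (psiW y)))).2 (by simp; omega)
      rw [this, inv_one]

end Psi

section Pack

/-- A package: a group with a submonoid whose alternating products (and those of the
inverse submonoid) become everything exactly at stages `a` (resp. `c`). -/
structure Pack (a c : ℕ) where
  G : Type
  [grp : Group G]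
  N : Submonoid G
  full_a : altProd (N : Set G) a = Set.univ
  full_c : altProd ((Minv N : Submonoid G) : Set G) c = Set.univ
  ne_a : altProd (N : Set G) (a - 1) ≠ Set.univ
  ne_c : altProd ((Minv N : Submonoid G) : Set G) (c - 1) ≠ Set.univ

attribute [instance] Pack.grp

/-- Swap a pack: replace the submonoid by its inverse. -/
def Pack.swap {a c : ℕ} (P : Pack a c) : Pack c a where
  G := P.G
  N := Minv P.N
  full_a := P.full_c
  full_c := by rw [Minv_Minv]; exact P.full_a
  ne_a := P.ne_c
  ne_c := by rw [Minv_Minv]; exact P.ne_a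

/-- The main recursion step. -/
def packStep {a c a' c' : ℕ} (P : Pack a c)
    (hA : ¬ Even a') (hA3 : 3 ≤ a') (hAa : a ≤ a') (hAc : c ≤ a' - 1)
    (hNeA : Even (a' - 1)) (hNeAc : a' - 1 - 2 ≤ c - 1)
    (hC : Even c') (hC0 : c' ≠ 0) (hCc : c ≤ c')
    (hNeC : ¬ Even (c' - 1)) (hNeCc : c' - 1 - 1 ≤ c - 1) :
    Pack a' c' where
  G := W (H := P.G)
  N := Mo P.N
  full_a := by
    apply altProd_Mo_univ hA hA3
    · exact altProd_univ_mono (by simpa using P.N.one_mem) hAa P.full_a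
    · exact altProd_univ_mono (by simpa using (Minv P.N).one_mem) hAc P.full_c
  ne_a := by
    apply altProd_Mo_ne_univ_of_even hNeA
    exact altProd_ne_univ_mono (by simpa using (Minv P.N).one_mem) hNeAc P.ne_c
  full_c := by
    rw [Minv_Mo]
    rw [altProd_map_univ_iff]
    apply altProd_Mo'_univ hC hC0
    exact altProd_univ_mono (by simpa using (Minv P.N).one_mem) hCc P.full_c
  ne_c := by
    rw [Minv_Mo]
    intro hfull
    apply altProd_Mo'_ne_univ_of_odd hNeC
      (altProd_ne_univ_mono (by simpa using (Minv P.N).one_mem) hNeCc P.ne_c)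
    exact (altProd_map_univ_iff _ _ _).mp hfull

/-- The positive cone in `Multiplicative ℤ`. -/
def posCone : Submonoid (Multiplicative ℤ) where
  carrier := {x | 0 ≤ Multiplicative.toAdd x}
  one_mem' := by simp
  mul_mem' := by
    intro x y hx hy
    simp only [Set.mem_setOf_eq, toAdd_mul] at *
    omega

theorem mem_posCone {x : Multiplicative ℤ} : x ∈ posCone ↔ 0 ≤ Multiplicative.toAdd x := Iff.rfl

theorem altProd_two_univ {G : Type} [Group G] (N : Submonoid G)
    (h : ∀ x : G, ∃ a b, a ∈ N ∧ b ∈ N ∧ x = a * b⁻¹) :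
    altProd (N : Set G) 2 = Set.univ := by
  apply Set.eq_univ_of_forall
  intro x
  obtain ⟨a, b, ha, hb, hab⟩ := h x
  have h1 : a ∈ altProd (N : Set G) 1 := by
    rw [altProd_succ]
    exact ⟨1, rfl, a, by rw [if_pos Even.zero]; exact ha, one_mul a⟩
  rw [altProd_succ]
  refine ⟨a, h1, b⁻¹, ?_, hab.symm⟩
  rw [if_neg (by simp), Set.mem_inv, inv_inv]
  exact hb

theorem altProd_one_ne_univ {G : Type} [Group G] (N : Submonoid G)
    (ζ : G) (hζ : ζ ∉ N) : altProd (N : Set G) 1 ≠ Set.univ := by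
  intro hfull
  have : ζ ∈ altProd (N : Set G) 1 := by rw [hfull]; trivial
  rw [altProd_succ] at this
  obtain ⟨u, hu, v, hv, huv⟩ := this
  have hu1 : u = 1 := hu
  rw [if_pos Even.zero] at hv
  apply hζ
  replace huv : u * v = ζ := huv
  have : v = ζ := by rw [← huv, hu1, one_mul]
  rwa [← this]

theorem Minv_posCone_mem {x : Multiplicative ℤ} :
    x ∈ Minv posCone ↔ Multiplicative.toAdd x ≤ 0 := by
  rw [mem_Minv, mem_posCone]
  simp

/-- The base pack at stage 2. -/
def pack₂ : Pack 2 2 where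
  G := Multiplicative ℤ
  N := posCone
  full_a := by
    apply altProd_two_univ
    intro x
    refine ⟨Multiplicative.ofAdd (max (Multiplicative.toAdd x) 0), x⁻¹ * Multiplicative.ofAdd (max (Multiplicative.toAdd x) 0), ?_, ?_, ?_⟩
    · rw [mem_posCone, toAdd_ofAdd]; exact le_max_right _ _
    · rw [mem_posCone]; simp only [toAdd_mul, toAdd_inv, toAdd_ofAdd]; omega
    · rw [mul_inv_rev, inv_inv, ← mul_assoc, mul_inv_cancel, one_mul]
  full_c := by
    apply altProd_two_univ
    intro x
    refine ⟨Multiplicative.ofAdd (min (Multiplicative.toAdd x) 0), x⁻¹ * Multiplicative.ofAdd (min (Multiplicative.toAdd x) 0), ?_, ?_, ?_⟩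
    · rw [Minv_posCone_mem, toAdd_ofAdd]; exact min_le_right _ _
    · rw [Minv_posCone_mem]; simp only [toAdd_mul, toAdd_inv, toAdd_ofAdd]; omega
    · rw [mul_inv_rev, inv_inv, ← mul_assoc, mul_inv_cancel, one_mul]
  ne_a := by
    apply altProd_one_ne_univ _ (Multiplicative.ofAdd (-1 : ℤ))
    intro h
    rw [mem_posCone, toAdd_ofAdd] at h
    omega
  ne_c := by
    apply altProd_one_ne_univ _ (Multiplicative.ofAdd (1 : ℤ))
    intro h
    rw [Minv_posCone_mem, toAdd_ofAdd] at h
    omega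

/-- The pack at stage 1. -/
def pack₁ : Pack 1 1 where
  G := Multiplicative ℤ
  N := ⊤
  full_a := by
    apply Set.eq_univ_of_forall
    intro x
    rw [altProd_succ]
    exact ⟨1, rfl, x, by rw [if_pos Even.zero]; trivial, one_mul x⟩
  full_c := by
    apply Set.eq_univ_of_forall
    intro x
    rw [altProd_succ]
    exact ⟨1, rfl, x, by rw [if_pos Even.zero]; exact trivial, one_mul x⟩
  ne_a := by
    intro hfull
    have : Multiplicative.ofAdd (1 : ℤ) ∈ altProd ((⊤ : Submonoid (Multiplicative ℤ)) : Set _) 0 := by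
      rw [hfull]; trivial
    have h2 : Multiplicative.ofAdd (1 : ℤ) = 1 := this
    simpa using congrArg Multiplicative.toAdd h2
  ne_c := by
    intro hfull
    have : Multiplicative.ofAdd (1 : ℤ) ∈ altProd ((Minv (⊤ : Submonoid (Multiplicative ℤ)) : Submonoid _) : Set _) 0 := by
      rw [hfull]; trivial
    have h2 : Multiplicative.ofAdd (1 : ℤ) = 1 := this
    simpa using congrArg Multiplicative.toAdd h2

/-- The odd tower: packs at all odd stages `≥ 3`. -/
def oddPack : (j : ℕ) → Pack (2*j+3) (2*j+2)
  | 0 => packStep pack₂ (by decide) (by decide) (by decide) (by decide) (by decide)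
      (by decide) (by decide) (by decide) (by decide) (by decide) (by decide)
  | (j+1) => packStep (Pack.swap (oddPack j))
      (by first | omega | simp [parity_simps] | (simp [parity_simps]; omega))
      (by omega) (by omega) (by omega)
      (by first | omega | simp [parity_simps] | (simp [parity_simps]; omega))
      (by omega)
      (by first | omega | simp [parity_simps] | (simp [parity_simps]; omega))
      (by omega) (by omega)
      (by first | omega | simp [parity_simps] | (simp [parity_simps]; omega))
      (by omega)

end Pack

end Kuczma

/-- Kuczma's problem, answered affirmatively: for every positive integer `n` there exist a
group `G` and a submonoid `M` of `G` such that the `n`-fold alternating product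
`M · M⁻¹ · M · … · M^{(−1)^{n−1}}` is all of `G`, but the product of the first `n − 1` of
these factors is not. -/
theorem exists_group_submonoid_altProd_eq (n : ℕ) (hn : 0 < n) :
    ∃ (G : Type) (_ : Group G) (M : Submonoid G),
      altProd (M : Set G) n = Set.univ ∧ altProd (M : Set G) (n - 1) ≠ Set.univ := by
  have key : ∀ m : ℕ, 1 ≤ m → ∃ c : ℕ, Nonempty (Kuczma.Pack m c) := by
    intro m hm
    rcases Nat.lt_or_ge m 3 with h3 | h3
    · interval_cases m
      · exact ⟨1, ⟨Kuczma.pack₁⟩⟩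
      · exact ⟨2, ⟨Kuczma.pack₂⟩⟩
    · rcases Nat.even_or_odd m with he | ho
      · obtain ⟨j, hj⟩ : ∃ j, m = 2*j+2 := by
          obtain ⟨t, ht⟩ := he
          exact ⟨t - 1, by omega⟩
        subst hj
        exact ⟨2*j+3, ⟨Kuczma.Pack.swap (Kuczma.oddPack j)⟩⟩
      · obtain ⟨j, hj⟩ : ∃ j, m = 2*j+3 := by
          obtain ⟨t, ht⟩ := ho
          exact ⟨t - 1, by omega⟩
        subst hj
        exact ⟨2*j+2, ⟨Kuczma.oddPack j⟩⟩
  obtain ⟨c, ⟨P⟩⟩ := key n hn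
  exact ⟨P.G, P.grp, P.N, P.full_a, P.ne_a⟩
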